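/- Let Λ and A_t be H×H matrix-valued functions on [0,T] with λ₂ := inf_t λ_min(Λ A_t) > 0, and let Q_t(I − S_t) be symmetric positive semidefinite with Q_T(I − S_T) positive semidefinite. Then the coupled forward–backward ODE system dz_t = (r z_t − Λ A_t p_t) dt, −dp_t = (r p_t + Q_t(I − S_t) z_t) dt, z_0 = 0, p_T = Q_T(I − S_T) z_T has only the trivial solution z ≡ 0, p ≡ 0. -/

import Mathlib

/-!
Pairing the state with the costate, `φ t = z t ⬝ᵥ p t` satisfies
`φ' = -(p ⬝ᵥ Λ A p) - z ⬝ᵥ Q z ≤ 0` (the `r`-terms cancel), while `φ 0 = 0 ≤ φ T` by the boundary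
conditions. Hence `φ` is constant, `φ' ≡ 0`, and coercivity of `Λ A` forces `p ≡ 0`. Then `z` solves
`z' = r z` with `z 0 = 0`, so `z ≡ 0` by uniqueness for Lipschitz ODEs.
-/

open Matrix

/-- The smallest eigenvalue of the symmetrization `(B + Bᵀ)/2` of a real matrix `B`,
expressed via the Rayleigh quotient (infimum of `xᵀ B x` over Euclidean unit vectors). -/
noncomputable def lambdaMin {d : ℕ} (B : Matrix (Fin d) (Fin d) ℝ) : ℝ :=
  sInf {r : ℝ | ∃ x : Fin d → ℝ, x ⬝ᵥ x = 1 ∧ r = x ⬝ᵥ (B *ᵥ x)}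

open Set

lemma isCompact_dotProduct_self_eq_one {d : ℕ} : IsCompact {x : Fin d → ℝ | x ⬝ᵥ x = 1} := by
  refine Metric.isCompact_of_isClosed_isBounded (isClosed_eq (by fun_prop) continuous_const) ?_
  refine (Metric.isBounded_closedBall (x := 0) (r := 1)).subset fun x hx => ?_
  rw [mem_closedBall_zero_iff, pi_norm_le_iff_of_nonneg zero_le_one]
  intro i
  rw [Real.norm_eq_abs, abs_le_one_iff_mul_self_le_one]
  exact (Finset.single_le_sum (f := fun j => x j * x j) (fun j _ => mul_self_nonneg _)
    (Finset.mem_univ i)).trans_eq hx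

lemma bddBelow_rayleigh {d : ℕ} (B : Matrix (Fin d) (Fin d) ℝ) :
    BddBelow {r : ℝ | ∃ x : Fin d → ℝ, x ⬝ᵥ x = 1 ∧ r = x ⬝ᵥ (B *ᵥ x)} :=
  (isCompact_dotProduct_self_eq_one.image (f := fun x => x ⬝ᵥ (B *ᵥ x)) (by fun_prop)).bddBelow.mono
    (by rintro _ ⟨x, hx, rfl⟩; exact ⟨x, hx, rfl⟩)

lemma mul_dotProduct_self_le_of_le_lambdaMin {d : ℕ} {B : Matrix (Fin d) (Fin d) ℝ} {c : ℝ}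
    (hB : c ≤ lambdaMin B) (x : Fin d → ℝ) : c * (x ⬝ᵥ x) ≤ x ⬝ᵥ (B *ᵥ x) := by
  rcases eq_or_ne x 0 with rfl | hx
  · simp
  have hxx : 0 < x ⬝ᵥ x := by simpa using dotProduct_self_star_pos_iff.2 hx
  set s := √(x ⬝ᵥ x)
  have hs : 0 < s := Real.sqrt_pos.2 hxx
  have hss : s * s = x ⬝ᵥ x := Real.mul_self_sqrt hxx.le
  have hunit : (s⁻¹ • x) ⬝ᵥ (s⁻¹ • x) = 1 := by
    rw [smul_dotProduct, dotProduct_smul, smul_eq_mul, smul_eq_mul, ← hss]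
    field_simp
  have hle := hB.trans (csInf_le (bddBelow_rayleigh B) ⟨s⁻¹ • x, hunit, rfl⟩)
  rw [mulVec_smul, smul_dotProduct, dotProduct_smul, smul_eq_mul, smul_eq_mul] at hle
  rw [← hss]
  calc c * (s * s) ≤ s⁻¹ * (s⁻¹ * (x ⬝ᵥ (B *ᵥ x))) * (s * s) :=
        mul_le_mul_of_nonneg_right hle (by positivity)
    _ = x ⬝ᵥ (B *ᵥ x) := by field_simp

theorem HasDerivAt.dotProduct {𝕜 ι : Type*} [NontriviallyNormedField 𝕜] [Fintype ι]
    {f g : 𝕜 → ι → 𝕜} {f' g' : ι → 𝕜} {t : 𝕜}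
    (hf : HasDerivAt f f' t) (hg : HasDerivAt g g' t) :
    HasDerivAt (fun s => f s ⬝ᵥ g s) (f' ⬝ᵥ g t + f t ⬝ᵥ g') t := by
  have := HasDerivAt.fun_sum fun i (_ : i ∈ Finset.univ) =>
    (hasDerivAt_pi.1 hf i).fun_mul (hasDerivAt_pi.1 hg i)
  rwa [Finset.sum_add_distrib] at this

lemma hasDerivAt_dotProduct_of_fbode {ι : Type*} [Fintype ι] {r t : ℝ} {M Q : Matrix ι ι ℝ}
    {z p : ℝ → ι → ℝ}
    (hz : HasDerivAt z (r • z t - M *ᵥ p t) t) (hp : HasDerivAt p (-(r • p t + Q *ᵥ z t)) t) :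
    HasDerivAt (fun s => z s ⬝ᵥ p s) (-(p t ⬝ᵥ (M *ᵥ p t)) - z t ⬝ᵥ (Q *ᵥ z t)) t := by
  refine (hz.dotProduct hp).congr_deriv ?_
  rw [sub_dotProduct, smul_dotProduct, dotProduct_neg, dotProduct_add, dotProduct_smul,
    dotProduct_comm (M *ᵥ p t), dotProduct_comm (z t) (p t), smul_eq_mul]
  ring

lemma eqOn_zero_of_hasDerivWithinAt_nonpos_of_le {f f' : ℝ → ℝ} {a b : ℝ} (hab : a < b)
    (hf : ∀ t ∈ Icc a b, HasDerivWithinAt f (f' t) (Icc a b) t)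
    (hf' : ∀ t ∈ Ioo a b, f' t ≤ 0) (hfab : f a ≤ f b) : EqOn f' 0 (Icc a b) := by
  have hanti : AntitoneOn f (Icc a b) := by
    refine antitoneOn_of_hasDerivWithinAt_nonpos (convex_Icc a b)
      (fun t ht => (hf t ht).continuousWithinAt) ?_ (by rwa [interior_Icc])
    rw [interior_Icc]
    exact fun t ht => (hf t (Ioo_subset_Icc_self ht)).mono Ioo_subset_Icc_self
  have hconst : EqOn f (fun _ => f a) (Icc a b) := fun t ht =>
    le_antisymm (hanti (left_mem_Icc.2 hab.le) ht ht.1)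
      (hfab.trans (hanti ht (right_mem_Icc.2 hab.le) ht.2))
  intro t ht
  exact (uniqueDiffOn_Icc hab t ht).eq_deriv _ (hf t ht)
    ((hasDerivWithinAt_const t _ (f a)).congr hconst (hconst ht))

lemma eqOn_zero_of_hasDerivAt_smul_self {E : Type*} [NormedAddCommGroup E] [NormedSpace ℝ E]
    {z : ℝ → E} {r a b : ℝ} (hz : ∀ t ∈ Icc a b, HasDerivAt z (r • z t) t) (ha : z a = 0) :
    EqOn z 0 (Icc a b) :=
  ODE_solution_unique_of_mem_Icc_right (v := fun _ x => r • x) (s := fun _ => univ) (g := fun _ => 0)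
    (fun _ _ => (lipschitzWith_smul r).lipschitzOnWith)
    (fun t ht => (hz t ht).continuousAt.continuousWithinAt)
    (fun t ht => (hz t (Ico_subset_Icc_self ht)).hasDerivWithinAt) (fun _ _ => mem_univ _)
    continuousOn_const (fun t _ => by simpa using hasDerivWithinAt_const t _ (0 : E))
    (fun _ _ => mem_univ _) ha

lemma fbode_costate_eqOn_zero {ι : Type*} [Fintype ι] {T r : ℝ} (hT : 0 < T)
    {M Q : ℝ → Matrix ι ι ℝ} (hM : ∀ t ∈ Icc 0 T, ∀ x ≠ 0, 0 < x ⬝ᵥ (M t *ᵥ x))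
    (hQ : ∀ t ∈ Icc 0 T, ∀ x, 0 ≤ x ⬝ᵥ (Q t *ᵥ x)) {z p : ℝ → ι → ℝ}
    (hz : ∀ t ∈ Icc 0 T, HasDerivAt z (r • z t - M t *ᵥ p t) t)
    (hp : ∀ t ∈ Icc 0 T, HasDerivAt p (-(r • p t + Q t *ᵥ z t)) t)
    (hz0 : z 0 = 0) (hpT : p T = Q T *ᵥ z T) :
    EqOn p 0 (Icc 0 T) := by
  have hMnonneg : ∀ t ∈ Icc 0 T, ∀ x, 0 ≤ x ⬝ᵥ (M t *ᵥ x) := fun t ht x => by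
    rcases eq_or_ne x 0 with rfl | hx
    · simp
    · exact (hM t ht x hx).le
  have hD : EqOn (fun t => -(p t ⬝ᵥ (M t *ᵥ p t)) - z t ⬝ᵥ (Q t *ᵥ z t)) 0 (Icc 0 T) :=
    eqOn_zero_of_hasDerivWithinAt_nonpos_of_le (f := fun t => z t ⬝ᵥ p t) hT
      (fun t ht => (hasDerivAt_dotProduct_of_fbode (hz t ht) (hp t ht)).hasDerivWithinAt)
      (fun t ht => by
        linarith [hMnonneg t (Ioo_subset_Icc_self ht) (p t), hQ t (Ioo_subset_Icc_self ht) (z t)])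
      (by simpa [hz0, hpT] using hQ T (right_mem_Icc.2 hT.le) (z T))
  intro t ht
  by_contra hpt
  have hzero : -(p t ⬝ᵥ (M t *ᵥ p t)) - z t ⬝ᵥ (Q t *ᵥ z t) = 0 := hD ht
  linarith [hM t ht (p t) hpt, hQ t ht (z t)]

theorem fbode_only_trivial_solution_general
    {H : ℕ} (T r : ℝ)
    (Λ : Matrix (Fin H) (Fin H) ℝ) (A : ℝ → Matrix (Fin H) (Fin H) ℝ)
    (lam₂ : ℝ) (hlam₂ : 0 < lam₂)
    (hLA : ∀ t ∈ Set.Icc 0 T, lam₂ ≤ lambdaMin (Λ * A t))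
    (QS : ℝ → Matrix (Fin H) (Fin H) ℝ)
    (hQS : ∀ t ∈ Set.Icc 0 T, (QS t).PosSemidef)
    (z p : ℝ → (Fin H → ℝ))
    (hz : ∀ t ∈ Set.Icc 0 T, HasDerivAt z (r • z t - (Λ * A t) *ᵥ p t) t)
    (hp : ∀ t ∈ Set.Icc 0 T, HasDerivAt p (-(r • p t + (QS t) *ᵥ z t)) t)
    (hz0 : z 0 = 0) (hpT : p T = (QS T) *ᵥ z T) :
    ∀ t ∈ Set.Icc 0 T, z t = 0 ∧ p t = 0 := by
  intro t ht
  have hp_zero : EqOn p 0 (Icc 0 T) := by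
    rcases (ht.1.trans ht.2).eq_or_lt with rfl | hT
    · intro s hs
      rw [le_antisymm hs.2 hs.1, hpT, hz0, mulVec_zero, Pi.zero_apply]
    · refine fbode_costate_eqOn_zero hT (fun s hs x hx => ?_)
        (fun s hs x => by simpa using (hQS s hs).dotProduct_mulVec_nonneg x) hz hp hz0 hpT
      have hxx : 0 < x ⬝ᵥ x := by simpa using dotProduct_self_star_pos_iff.2 hx
      exact (mul_pos hlam₂ hxx).trans_le (mul_dotProduct_self_le_of_le_lambdaMin (hLA s hs) x)
  have hz_zero : EqOn z 0 (Icc 0 T) :=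
    eqOn_zero_of_hasDerivAt_smul_self (fun s hs => by simpa [hp_zero hs] using hz s hs) hz0
  exact ⟨hz_zero ht, hp_zero ht⟩

/-- Uniqueness for the forward–backward ODE system: with
`inf_t λ_min(Λ A_t) ≥ λ₂ > 0` and `Q_t(I − S_t)` symmetric positive semidefinite,
the system `dz = (r z − Λ A_t p) dt`, `−dp = (r p + Q_t(I−S_t) z) dt`,
`z₀ = 0`, `p_T = Q_T(I − S_T) z_T` admits only the trivial solution. -/
theorem fbode_only_trivial_solution
    {H : ℕ} (T r : ℝ) (hT : 0 ≤ T)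
    (Λ : Matrix (Fin H) (Fin H) ℝ) (A : ℝ → Matrix (Fin H) (Fin H) ℝ)
    (lam₂ : ℝ) (hlam₂ : 0 < lam₂)
    (hLA : ∀ t ∈ Set.Icc 0 T, lam₂ ≤ lambdaMin (Λ * A t))
    (QS : ℝ → Matrix (Fin H) (Fin H) ℝ)
    (hQS : ∀ t ∈ Set.Icc 0 T, (QS t).PosSemidef)
    (z p : ℝ → (Fin H → ℝ))
    (hz : ∀ t ∈ Set.Icc 0 T, HasDerivAt z (r • z t - (Λ * A t) *ᵥ p t) t)
    (hp : ∀ t ∈ Set.Icc 0 T, HasDerivAt p (-(r • p t + (QS t) *ᵥ z t)) t)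
    (hz0 : z 0 = 0) (hpT : p T = (QS T) *ᵥ z T) :
    ∀ t ∈ Set.Icc 0 T, z t = 0 ∧ p t = 0 :=
  fbode_only_trivial_solution_general T r Λ A lam₂ hlam₂ hLA QS hQS z p hz hp hz0 hpT
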